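/- arXiv:math/9809133 — 2 statements merged into one kernel-verified Lean document; each statement's English description precedes it below -/
import Mathlib

section
/- Let N be a complete Riemannian manifold, x0 ∈ N, and let g ∈ π₁(N,x0) have a minimal representative geodesic loop γ of length d, parametrized by arclength. If d_N(γ(0), γ(d/2)) < d/2, then there exist h₁, h₂ ∈ π₁(N,x0) with g = h₂·h₁ such that d_Ñ(x̃0, h₁·x̃0) < d and d_Ñ(x̃0, h₂·x̃0) < d, where x̃0 is a lift of x0 to the universal cover Ñ. -/
/-!
Let `m` be the midpoint of the lifted loop, so `d(x̃0, m) = d(m, g·x̃0) = d/2`. Lifting a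
shortest path from `π m` to `x0` starting at `m` ends at some `h·x̃0`; a covering map that is a
local isometry does not increase the length of lifted curves, so
`d(m, h·x̃0) ≤ d_N(π m, x0) < d/2`. The triangle inequality through `m` now bounds both
`d(x̃0, h·x̃0)` and `d(h·x̃0, g·x̃0) = d(x̃0, h⁻¹g·x̃0)` strictly by `d`, and `g = h·(h⁻¹g)`.
-/

open Metric MeasureTheory Filter ENNReal
open scoped Manifold

/-- `γ` is a unit-speed minimal geodesic on the interval `[a,b]`:
it realizes distances there. -/
def IsMinGeodesicOn {M : Type*} [MetricSpace M] (γ : ℝ → M) (a b : ℝ) : Prop :=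
  ∀ s ∈ Set.Icc a b, ∀ t ∈ Set.Icc a b, dist (γ s) (γ t) = |s - t|

/-- `(M,d)` is a geodesic metric space: any two points are joined by a minimal geodesic.
This holds for the distance of any complete Riemannian manifold. -/
def IsGeodesicMetricSpace (M : Type*) [MetricSpace M] : Prop :=
  ∀ x y : M, ∃ γ : ℝ → M, γ 0 = x ∧ γ (dist x y) = y ∧ IsMinGeodesicOn γ 0 (dist x y)

/-- The length of a path in a metric space, as its total variation. -/
noncomputable def pathELength {X : Type*} [MetricSpace X] {x y : X} (p : Path x y) : ℝ≥0∞ :=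
  eVariationOn p Set.univ

attribute [local instance] Path.Homotopic.setoid

/-- The homotopy class of a loop, as an element of the fundamental group. -/
noncomputable def loopClass {X : Type*} [TopologicalSpace X] {x : X} (p : Path x x) :
    FundamentalGroup X x :=
  (show FundamentalGroupoid.mk x ⟶ FundamentalGroupoid.mk x from ⟦p⟧)

/-- The universal (metric) cover of a pointed metric space `(N, x0)`, together with its
deck transformation action by the fundamental group `π₁(N, x0)`.  The covering projection
is a local isometry, so that the distance on the cover is the lifted (Riemannian)
distance; the deck transformations act freely and transitively on fibers, by isometries,
and `deck g (basept)` is the endpoint of the lift starting at `basept` of any loop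
representing `g` (monodromy). -/
structure UniversalCoverSetup (N : Type) [MetricSpace N] (x0 : N) where
  cover : Type
  covMetric : MetricSpace cover
  proj : cover → N
  basept : cover
  proj_base : proj basept = x0
  covering : IsCoveringMap proj
  simplyConnected : SimplyConnectedSpace cover
  complete : CompleteSpace cover
  geodesic : IsGeodesicMetricSpace cover
  locIsom : ∀ x : cover, ∃ ε > (0 : ℝ), ∀ y ∈ Metric.ball x ε, ∀ z ∈ Metric.ball x ε,
    dist (proj y) (proj z) = dist y z
  deck : FundamentalGroup N x0 →* (cover ≃ᵢ cover)
  deck_proj : ∀ (g : FundamentalGroup N x0) (x : cover), proj (deck g x) = proj x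
  deck_free : ∀ (g : FundamentalGroup N x0) (x : cover), deck g x = x → g = 1
  deck_transitive : ∀ x y : cover, proj x = proj y → ∃ g : FundamentalGroup N x0, deck g x = y
  monodromy : ∀ (g : FundamentalGroup N x0) (q : Path basept (deck g basept)),
    loopClass ((q.map covering.continuous).cast proj_base.symm
      (((deck_proj g basept).trans proj_base).symm)) = g

attribute [instance] UniversalCoverSetup.covMetric

namespace UniversalCoverSetup

variable {N : Type} [MetricSpace N] {x0 : N}

/-- The length `d_Ñ(x̃0, g·x̃0)` associated to an element `g` of the fundamental group:
the length of a minimal representative geodesic loop of `g`. -/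
noncomputable def len (S : UniversalCoverSetup N x0) (g : FundamentalGroup N x0) : ℝ :=
  dist S.basept (S.deck g S.basept)

/-- `γt` is (the lift of) a minimal representative geodesic loop of `g`: a minimal
geodesic in the universal cover from `x̃0` to `g·x̃0`, parametrized by arclength. -/
def IsMinRepLift (S : UniversalCoverSetup N x0) (g : FundamentalGroup N x0)
    (γt : ℝ → S.cover) : Prop :=
  γt 0 = S.basept ∧ γt (S.len g) = S.deck g S.basept ∧ IsMinGeodesicOn γt 0 (S.len g)

end UniversalCoverSetup

open Topology

section LocalIsometry

variable {E X : Type*} [MetricSpace E] [MetricSpace X]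

theorem IsMinGeodesicOn.dist_left_eq {γ : ℝ → X} {a b s : ℝ} (hγ : IsMinGeodesicOn γ a b)
    (hs : s ∈ Set.Icc a b) : dist (γ a) (γ s) = s - a := by
  rw [hγ a ⟨le_rfl, hs.1.trans hs.2⟩ s hs, abs_sub_comm, abs_of_nonneg (sub_nonneg.2 hs.1)]

theorem IsMinGeodesicOn.dist_right_eq {γ : ℝ → X} {a b s : ℝ} (hγ : IsMinGeodesicOn γ a b)
    (hs : s ∈ Set.Icc a b) : dist (γ s) (γ b) = b - s := by
  rw [hγ s hs b ⟨hs.1.trans hs.2, le_rfl⟩, abs_sub_comm, abs_of_nonneg (sub_nonneg.2 hs.2)]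

def IsLocalIsometry (p : E → X) : Prop :=
  ∀ x : E, ∃ ε > (0 : ℝ), ∀ y ∈ ball x ε, ∀ z ∈ ball x ε, dist (p y) (p z) = dist y z

theorem dist_le_mul_of_forall_eventually_dist_le {f : ℝ → E} {a b K : ℝ} (hab : a ≤ b)
    (hf : ContinuousOn f (Set.Icc a b))
    (hloc : ∀ x ∈ Set.Ico a b, ∀ᶠ t in 𝓝[>] x, dist (f x) (f t) ≤ K * (t - x)) :
    dist (f a) (f b) ≤ K * (b - a) := by
  refine image_le_of_liminf_slope_right_le_deriv_boundary (f := fun t => dist (f a) (f t))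
    (B := fun t => K * (t - a)) (B' := fun _ => K)
    ((continuous_const.dist continuous_id).comp_continuousOn hf) (by simp) (by fun_prop)
    (fun x _ => ((hasDerivWithinAt_id x _).sub_const a).const_mul K |>.congr_deriv (mul_one K))
    ?_ ⟨hab, le_rfl⟩
  intro x hx r hr
  refine ((hloc x hx).and self_mem_nhdsWithin).frequently.mono ?_
  rintro t ⟨hxt, hlt : x < t⟩
  rw [slope_def_field, div_lt_iff₀ (sub_pos.2 hlt)]
  nlinarith [dist_triangle (f a) (f x) (f t)]

theorem IsLocalIsometry.dist_le_of_lipschitzOnWith_comp {p : E → X} (hp : IsLocalIsometry p)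
    {f : ℝ → E} {a b : ℝ} {K : NNReal} (hab : a ≤ b) (hf : ContinuousOn f (Set.Icc a b))
    (hpf : LipschitzOnWith K (p ∘ f) (Set.Icc a b)) :
    dist (f a) (f b) ≤ K * (b - a) := by
  refine dist_le_mul_of_forall_eventually_dist_le hab hf fun x hx => ?_
  have hxI : x ∈ Set.Icc a b := Set.Ico_subset_Icc_self hx
  obtain ⟨ε, hε, hiso⟩ := hp (f x)
  have hnear : ∀ᶠ t in 𝓝[Set.Icc a b] x, f t ∈ ball (f x) ε :=
    hf x hxI (ball_mem_nhds _ hε)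
  have hIcc : Set.Icc a b ∈ 𝓝[>] x := Icc_mem_nhdsGT_of_mem hx
  filter_upwards [nhdsWithin_le_of_mem hIcc hnear, hIcc, self_mem_nhdsWithin] with t hft htI hxt
  rw [← hiso _ (mem_ball_self hε) _ hft]
  calc dist (p (f x)) (p (f t)) ≤ K * dist x t := hpf.dist_le_mul x hxI t htI
    _ = K * (t - x) := by rw [Real.dist_eq, abs_sub_comm, abs_of_pos (sub_pos.2 hxt)]

theorem IsCoveringMap.exists_dist_le_of_lipschitzWith {p : E → X} (cov : IsCoveringMap p)
    (hp : IsLocalIsometry p) {c : C(unitInterval, X)} {K : NNReal} (hc : LipschitzWith K c)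
    {e : E} (he : p e = c 0) : ∃ q, p q = c 1 ∧ dist e q ≤ K := by
  set Γ := cov.liftPath c e he.symm
  have hlift : ∀ t, p (Γ t) = c t := congrFun (cov.liftPath_lifts c e he.symm)
  have hΓ0 : Γ 0 = e := cov.liftPath_zero c e he.symm
  refine ⟨Γ 1, hlift 1, ?_⟩
  have hdist := hp.dist_le_of_lipschitzOnWith_comp zero_le_one
    (Γ.continuous.Icc_extend' (h := zero_le_one)).continuousOn (K := K) ?_
  · simpa [hΓ0] using hdist
  · intro s hs t ht
    simp only [Function.comp_apply, Set.IccExtend_of_mem _ _ hs, Set.IccExtend_of_mem _ _ ht,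
      hlift]
    exact hc.edist_le_mul _ _

theorem IsGeodesicMetricSpace.exists_lipschitzWith_path (hX : IsGeodesicMetricSpace X)
    (x y : X) : ∃ c : C(unitInterval, X), c 0 = x ∧ c 1 = y ∧ LipschitzWith (nndist x y) c := by
  obtain ⟨σ, hσ0, hσ1, hσ⟩ := hX x y
  have hσc : LipschitzWith (nndist x y) fun t : unitInterval => σ (dist x y * t) := by
    refine LipschitzWith.of_dist_le_mul fun s t => ?_
    have hmem : ∀ u : unitInterval, dist x y * u ∈ Set.Icc 0 (dist x y) := fun u =>
      ⟨mul_nonneg dist_nonneg u.2.1, mul_le_of_le_one_right dist_nonneg u.2.2⟩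
    rw [hσ _ (hmem s) _ (hmem t), ← mul_sub, abs_mul, abs_of_nonneg dist_nonneg]
    rfl
  exact ⟨⟨_, hσc.continuous⟩, by simpa using hσ0, by simpa using hσ1, hσc⟩

theorem IsCoveringMap.exists_mem_fiber_dist_le {p : E → X} (cov : IsCoveringMap p)
    (hp : IsLocalIsometry p) (hX : IsGeodesicMetricSpace X) (e : E) (y : X) :
    ∃ q, p q = y ∧ dist e q ≤ dist (p e) y := by
  obtain ⟨c, hc0, hc1, hc⟩ := hX.exists_lipschitzWith_path (p e) y
  simpa [hc1] using cov.exists_dist_le_of_lipschitzWith hp hc hc0.symm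

end LocalIsometry

namespace UniversalCoverSetup

variable {N : Type} [MetricSpace N] {x0 : N}

theorem len_inv_mul (S : UniversalCoverSetup N x0) (h g : FundamentalGroup N x0) :
    S.len (h⁻¹ * g) = dist (S.deck h S.basept) (S.deck g S.basept) := by
  rw [len, ← (S.deck h).dist_eq, ← IsometryEquiv.mul_apply, ← map_mul, mul_inv_cancel_left]

end UniversalCoverSetup

theorem splitting_of_non_halfway_minimal_loop_general
    (N : Type) [MetricSpace N] (hgeo : IsGeodesicMetricSpace N)
    (x0 : N) (S : UniversalCoverSetup N x0)
    (g : FundamentalGroup N x0) (γt : ℝ → S.cover) (hγt : S.IsMinRepLift g γt)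
    (hhalf : dist (S.proj (γt 0)) (S.proj (γt (S.len g / 2))) < S.len g / 2) :
    ∃ h₁ h₂ : FundamentalGroup N x0, g = h₂ * h₁ ∧
      S.len h₁ < S.len g ∧ S.len h₂ < S.len g := by
  obtain ⟨hγ0, hγd, hγ⟩ := hγt
  set d := S.len g
  have hd : 0 ≤ d := dist_nonneg
  have hmid : d / 2 ∈ Set.Icc 0 d := ⟨by linarith, by linarith⟩
  set m := γt (d / 2)
  obtain ⟨p, hp, hmp⟩ := S.covering.exists_mem_fiber_dist_le S.locIsom hgeo m x0
  obtain ⟨h, rfl⟩ := S.deck_transitive S.basept p (by rw [hp, S.proj_base])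
  replace hmp : dist m (S.deck h S.basept) < d / 2 := by
    rw [hγ0, S.proj_base, dist_comm] at hhalf
    exact hmp.trans_lt hhalf
  refine ⟨h⁻¹ * g, h, (mul_inv_cancel_left h g).symm, ?_, ?_⟩
  · calc S.len (h⁻¹ * g) = dist (S.deck h S.basept) (S.deck g S.basept) := S.len_inv_mul h g
      _ ≤ dist (S.deck h S.basept) m + dist m (γt d) := by rw [hγd]; exact dist_triangle _ _ _
      _ < d := by rw [dist_comm, hγ.dist_right_eq hmid]; linarith
  · calc S.len h ≤ dist (γt 0) m + dist m (S.deck h S.basept) := by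
          rw [hγ0]; exact dist_triangle _ _ _
      _ < d := by rw [hγ.dist_left_eq hmid]; linarith

/-- If a minimal representative geodesic loop `γ = proj ∘ γ̃` of `g ∈ π₁(N, x0)`, of
length `d = d_Ñ(x̃0, g·x̃0)`, is not minimal to its halfway point,
`d_N(γ(0), γ(d/2)) < d/2`, then `g = h₂·h₁` for elements `h₁, h₂ ∈ π₁(N, x0)` with
`d_Ñ(x̃0, h₁·x̃0) < d` and `d_Ñ(x̃0, h₂·x̃0) < d`. -/
theorem splitting_of_non_halfway_minimal_loop
    (n : ℕ) (N : Type) [MetricSpace N]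
    [ChartedSpace (EuclideanSpace ℝ (Fin n)) N] [IsManifold (𝓡 n) (⊤ : ℕ∞) N]
    [CompleteSpace N] [PathConnectedSpace N] (hgeo : IsGeodesicMetricSpace N)
    (x0 : N) (S : UniversalCoverSetup N x0)
    (g : FundamentalGroup N x0) (γt : ℝ → S.cover) (hγt : S.IsMinRepLift g γt)
    (hhalf : dist (S.proj (γt 0)) (S.proj (γt (S.len g / 2))) < S.len g / 2) :
    ∃ h₁ h₂ : FundamentalGroup N x0, g = h₂ * h₁ ∧
      S.len h₁ < S.len g ∧ S.len h₂ < S.len g :=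
  splitting_of_non_halfway_minimal_loop_general N hgeo x0 S g γt hγt hhalf
end

section
/- Let N be a complete Riemannian manifold with x0 ∈ N and π₁(N,x0) infinitely generated, and let {g_k} be a set of halfway generators based at x0 with minimal representative geodesic loops γ_k of lengths d_k. Then the lengths d_k diverge to infinity as k → ∞. -/
/-!
The deck transformations are isometries of `Ñ`, and since the projection is a local isometry
and the action is free, the orbit of `x̃0` is uniformly discrete. The cover `Ñ` is complete,
geodesic and (as a cover of a manifold) locally compact, hence proper by Hopf–Rinow; so a ball
about `x̃0` meets the orbit in finitely many points, i.e. only finitely many `g ∈ π₁(N, x0)` have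
`d_Ñ(x̃0, g·x̃0) ≤ b`. Independent generators are pairwise distinct, so `d_k → ∞`.
-/

open Metric MeasureTheory Filter ENNReal
open scoped Manifold

attribute [local instance] Path.Homotopic.setoid

open Topology

namespace IsGeodesicMetricSpace

variable {M : Type*} [MetricSpace M]

theorem closedBall_add_subset_cthickening (hM : IsGeodesicMetricSpace M) (o : M) {r : ℝ}
    (hr : 0 ≤ r) (δ : ℝ) : closedBall o (r + δ) ⊆ cthickening δ (closedBall o r) := by
  intro x hx
  rcases le_or_gt (dist x o) r with hxr | hrx
  · exact self_subset_cthickening _ hxr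
  obtain ⟨γ, hγo, hγx, hγ⟩ := hM o x
  have hrD : r ∈ Set.Icc 0 (dist o x) := ⟨hr, dist_comm x o ▸ hrx.le⟩
  have hDD : dist o x ∈ Set.Icc 0 (dist o x) := ⟨dist_nonneg, le_rfl⟩
  refine mem_cthickening_of_dist_le x (γ r) δ _ ?_ ?_
  · have := hγ r hrD 0 ⟨le_rfl, dist_nonneg⟩
    rw [hγo, sub_zero, abs_of_nonneg hr] at this
    exact this.le
  · have := hγ _ hDD r hrD
    rw [hγx, abs_of_nonneg (sub_nonneg.2 hrD.2)] at this
    rw [this, dist_comm o x]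
    linarith [mem_closedBall.1 hx]

theorem exists_isCompact_closedBall_add [LocallyCompactSpace M] (hM : IsGeodesicMetricSpace M)
    (o : M) {r : ℝ} (hr : 0 ≤ r) (hK : IsCompact (closedBall o r)) :
    ∃ δ > 0, IsCompact (closedBall o (r + δ)) := by
  obtain ⟨K, hK', hsub⟩ := exists_compact_superset hK
  obtain ⟨δ, hδ, hδsub⟩ := hK.exists_cthickening_subset_open isOpen_interior hsub
  exact ⟨δ, hδ, hK'.of_isClosed_subset isClosed_closedBall
    ((hM.closedBall_add_subset_cthickening o hr δ).trans (hδsub.trans interior_subset))⟩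

theorem isCompact_closedBall_of_forall_lt [CompleteSpace M] (hM : IsGeodesicMetricSpace M)
    (o : M) {R : ℝ} (h : ∀ r < R, IsCompact (closedBall o r)) : IsCompact (closedBall o R) := by
  rcases le_or_gt R 0 with hR | hR
  · exact (subsingleton_closedBall o hR).isCompact
  refine (totallyBounded_iff.2 fun ε hε => ?_).isCompact_of_isClosed isClosed_closedBall
  set r := max 0 (R - ε / 4)
  have hr : 0 ≤ r := le_max_left _ _
  obtain ⟨t, ht, hcover⟩ :=
    totallyBounded_iff.1 (h r (max_lt hR (by linarith))).totallyBounded (ε / 2) (by linarith)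
  refine ⟨t, ht, fun x hx => ?_⟩
  have hx' : x ∈ thickening (ε / 2) (closedBall o r) :=
    cthickening_subset_thickening' (by linarith) (by linarith) _ <|
      hM.closedBall_add_subset_cthickening o hr (ε / 4) <|
        closedBall_subset_closedBall (by linarith [le_max_right 0 (R - ε / 4)]) hx
  obtain ⟨y, hy, hxy⟩ := mem_thickening_iff.1 hx'
  obtain ⟨c, hc, hyc⟩ := Set.mem_iUnion₂.1 (hcover hy)
  exact Set.mem_iUnion₂.2 ⟨c, hc, mem_ball.2 <| by
    linarith [dist_triangle x y c, mem_ball.1 hyc]⟩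

/-- Hopf–Rinow theorem for geodesic spaces (Cohn-Vossen): the radii of compact balls about a point
form a set that contains `0`, is closed, and extends past each of its points. -/
theorem properSpace [CompleteSpace M] [LocallyCompactSpace M] (hM : IsGeodesicMetricSpace M) :
    ProperSpace M := by
  rcases isEmpty_or_nonempty M with _ | ⟨⟨o⟩⟩
  · exact ⟨fun x => isEmptyElim x⟩
  set s := {r : ℝ | IsCompact (closedBall o r)}
  have hmono : ∀ {r r' : ℝ}, r' ≤ r → r ∈ s → r' ∈ s := fun hle hr =>
    hr.of_isClosed_subset isClosed_closedBall (closedBall_subset_closedBall hle)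
  have hclosed : IsClosed s := isClosed_of_closure_subset fun R hR =>
    hM.isCompact_closedBall_of_forall_lt o fun r hr => by
      obtain ⟨r', hr', hr's⟩ := mem_closure_iff.1 hR (Set.Ioi r) isOpen_Ioi hr
      exact hmono hr'.le hr's
  have hext : ∀ b, ∀ r ∈ s ∩ Set.Ico 0 b, (s ∩ Set.Ioc r b).Nonempty := by
    rintro b r ⟨hr, hr0, hrb⟩
    obtain ⟨δ, hδ, hδs⟩ := hM.exists_isCompact_closedBall_add o hr0 hr
    exact ⟨min (r + δ) b, hmono (min_le_left _ _) hδs, lt_min (by linarith) hrb, min_le_right _ _⟩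
  have h0 : (0 : ℝ) ∈ s := by simp [s]
  refine ProperSpace.of_seq_closedBall (x := o) tendsto_id <| (eventually_ge_atTop 0).mono
    fun b hb => (hclosed.inter isClosed_Icc).mem_of_ge_of_forall_exists_gt h0 hb (hext b)

end IsGeodesicMetricSpace

theorem IsLocalHomeomorph.locallyCompactSpace {X Y : Type*} [TopologicalSpace X]
    [TopologicalSpace Y] [LocallyCompactSpace Y] {f : X → Y} (hf : IsLocalHomeomorph f) :
    LocallyCompactSpace X := by
  refine ⟨fun x n hn => ?_⟩
  obtain ⟨e, hxe, rfl⟩ := hf x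
  have hn' : n ∩ e.source ∈ 𝓝 x := Filter.inter_mem hn (e.open_source.mem_nhds hxe)
  obtain ⟨K, hK, hKsub, hKc⟩ := local_compact_nhds (e.image_mem_nhds hxe hn')
  have hKt : K ⊆ e.target :=
    hKsub.trans (e.image_source_eq_target ▸ Set.image_mono Set.inter_subset_right)
  refine ⟨e.symm '' K, ?_, ?_, hKc.image_of_continuousOn (e.continuousOn_symm.mono hKt)⟩
  · simpa [e.left_inv hxe] using e.symm.image_mem_nhds (e.map_source hxe) hK
  · rintro _ ⟨_, hy, rfl⟩
    obtain ⟨z, hz, rfl⟩ := hKsub hy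
    rw [e.left_inv hz.2]
    exact hz.1

theorem finite_preimage_closedBall_of_pairwise_le_dist {ι X : Type*} [MetricSpace X]
    [ProperSpace X] {f : ι → X} {ε : ℝ} (hε : 0 < ε)
    (hf : Pairwise fun i j => ε ≤ dist (f i) (f j)) (x : X) (r : ℝ) :
    (f ⁻¹' closedBall x r).Finite := by
  let _ : TopologicalSpace ι := ⊥
  have : DiscreteTopology ι := ⟨rfl⟩
  exact ((isClosedEmbedding_of_pairwise_le_dist hε hf).isCompact_preimage
    (isCompact_closedBall x r)).finite_of_discrete

namespace UniversalCoverSetup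

variable {N : Type} [MetricSpace N] {x0 : N} (S : UniversalCoverSetup N x0)

theorem properSpace_cover [LocallyCompactSpace N] : ProperSpace S.cover :=
  have := S.complete
  have := S.covering.isLocalHomeomorph.locallyCompactSpace
  S.geodesic.properSpace

theorem exists_pos_forall_ne_one_le_len : ∃ ε > 0, ∀ h, h ≠ 1 → ε ≤ S.len h := by
  obtain ⟨ε, hε, hisom⟩ := S.locIsom S.basept
  refine ⟨ε, hε, fun h hh => le_of_not_gt fun hlt => hh (S.deck_free h S.basept ?_)⟩
  have := hisom _ (mem_ball_self hε) _ (mem_ball'.2 hlt)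
  rw [S.deck_proj, dist_self] at this
  exact (dist_eq_zero.1 this.symm).symm

theorem dist_deck_basept (g h : FundamentalGroup N x0) :
    dist (S.deck g S.basept) (S.deck h S.basept) = S.len (g⁻¹ * h) := by
  rw [len, ← (S.deck g⁻¹).dist_eq, ← IsometryEquiv.mul_apply, ← map_mul, ← IsometryEquiv.mul_apply,
    ← map_mul, inv_mul_cancel, map_one]
  rfl

theorem tendsto_len_cofinite_atTop [LocallyCompactSpace N] :
    Tendsto S.len cofinite atTop := by
  have := S.properSpace_cover
  obtain ⟨ε, hε, hsep⟩ := S.exists_pos_forall_ne_one_le_len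
  have hf : Pairwise fun g h => ε ≤ dist (S.deck g S.basept) (S.deck h S.basept) :=
    fun g h hgh => by
      simpa only [S.dist_deck_basept] using hsep _ (by rwa [Ne, inv_mul_eq_one])
  refine tendsto_atTop.2 fun b => eventually_cofinite.2 <|
    (finite_preimage_closedBall_of_pairwise_le_dist hε hf S.basept b).subset fun g hg => ?_
  exact mem_closedBall'.2 (not_le.1 hg).le

end UniversalCoverSetup

theorem injective_of_forall_notMem_closure_lt {G : Type*} [Group G] {g : ℕ → G}
    (hg : ∀ k, g k ∉ Subgroup.closure {h | ∃ j, j < k ∧ g j = h}) : Function.Injective g :=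
  .of_lt_imp_ne fun i j hij heq => hg j (Subgroup.subset_closure ⟨i, hij, heq⟩)

theorem halfway_generator_lengths_tendsto_atTop_general
    (n : ℕ) (N : Type) [MetricSpace N]
    [ChartedSpace (EuclideanSpace ℝ (Fin n)) N]
    (x0 : N) (S : UniversalCoverSetup N x0)
    (g : ℕ → FundamentalGroup N x0)
    (hindep : ∀ k : ℕ, g k ∉ Subgroup.closure {h | ∃ j : ℕ, j < k ∧ g j = h}) :
    Filter.Tendsto (fun k : ℕ => S.len (g k)) Filter.atTop Filter.atTop := by
  have := ChartedSpace.locallyCompactSpace (EuclideanSpace ℝ (Fin n)) N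
  rw [← Nat.cofinite_eq_atTop]
  exact S.tendsto_len_cofinite_atTop.comp
    (injective_of_forall_notMem_closure_lt hindep).tendsto_cofinite

/-- If `π₁(N, x0)` is infinitely generated and `g_1, g_2, …` is a set of halfway
generators based at `x0` (an independent generating sequence, each `g_k` minimizing
`d_Ñ(x̃0, g·x̃0)` outside the subgroup generated by its predecessors, whose minimal
representative geodesic loops `γ_k` of lengths `d_k` are minimal halfway around), then
the lengths `d_k` diverge to infinity. -/
theorem halfway_generator_lengths_tendsto_atTop
    (n : ℕ) (N : Type) [MetricSpace N]
    [ChartedSpace (EuclideanSpace ℝ (Fin n)) N] [IsManifold (𝓡 n) (⊤ : ℕ∞) N]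
    [CompleteSpace N] [PathConnectedSpace N] (hgeo : IsGeodesicMetricSpace N)
    (x0 : N) (S : UniversalCoverSetup N x0)
    (hfg : ¬ Group.FG (FundamentalGroup N x0))
    (g : ℕ → FundamentalGroup N x0) (γt : ℕ → ℝ → S.cover)
    (hgen : Subgroup.closure (Set.range g) = ⊤)
    (hindep : ∀ k : ℕ, g k ∉ Subgroup.closure {h | ∃ j : ℕ, j < k ∧ g j = h})
    (hmin : ∀ (k : ℕ) (h : FundamentalGroup N x0),
      h ∉ Subgroup.closure {h' | ∃ j : ℕ, j < k ∧ g j = h'} → S.len (g k) ≤ S.len h)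
    (hlift : ∀ k : ℕ, S.IsMinRepLift (g k) (γt k))
    (hhalf : ∀ k : ℕ, dist (S.proj (γt k 0)) (S.proj (γt k (S.len (g k) / 2)))
      = S.len (g k) / 2) :
    Filter.Tendsto (fun k : ℕ => S.len (g k)) Filter.atTop Filter.atTop :=
  halfway_generator_lengths_tendsto_atTop_general n N x0 S g hindep
end
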